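/- Let K1 and K2 be quantum channels (completely positive trace-preserving maps) on density matrices with fixed points ρ1 and ρ2 respectively, and let τ be a positive integer such that for every density matrix ρ, ‖K1^τ[ρ] − ρ1‖₁ ≤ ε. Then ‖ρ1 − ρ2‖₁ ≤ ε + τ·‖K1[ρ2] − ρ2‖₁. -/

import Mathlib

open MeasureTheory Matrix
open scoped ComplexOrder

/-- The trace norm (Schatten 1-norm) of a complex square matrix. -/
noncomputable def traceNorm {n : Type*} [Fintype n] [DecidableEq n] (A : Matrix n n ℂ) : ℝ :=
  (((Matrix.posSemidef_conjTranspose_mul_self A).1.eigenvectorUnitary.1 *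
      Matrix.diagonal (((↑) : ℝ → ℂ) ∘ (√·) ∘ (Matrix.posSemidef_conjTranspose_mul_self A).1.eigenvalues) *
      (star (Matrix.posSemidef_conjTranspose_mul_self A).1.eigenvectorUnitary : Matrix n n ℂ)).trace).re

/-- The operator norm (Schatten ∞-norm) of a complex square matrix. -/
noncomputable def opNorm {n : Type*} [Fintype n] [DecidableEq n] (A : Matrix n n ℂ) : ℝ :=
  ‖Matrix.toEuclideanCLM (𝕜 := ℂ) (n := n) A‖

/-- A density matrix: positive semidefinite with unit trace. -/
def IsDensityMatrix {n : Type*} [Fintype n] [DecidableEq n] (ρ : Matrix n n ℂ) : Prop :=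
  ρ.PosSemidef ∧ ρ.trace = 1

def IsTracePreserving {n : Type*} [Fintype n] [DecidableEq n]
    (Φ : Matrix n n ℂ →ₗ[ℂ] Matrix n n ℂ) : Prop :=
  ∀ A, (Φ A).trace = A.trace

/-- Complete positivity: all finite ampliations map positive semidefinite matrices to
positive semidefinite matrices. -/
def IsCompletelyPositive {n : Type*} [Fintype n] [DecidableEq n]
    (Φ : Matrix n n ℂ →ₗ[ℂ] Matrix n n ℂ) : Prop :=
  ∀ (k : ℕ) (A : Matrix (n × Fin k) (n × Fin k) ℂ), A.PosSemidef →
    (Matrix.of fun (p q : n × Fin k) =>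
      Φ (Matrix.of fun i j => A (i, p.2) (j, q.2)) p.1 q.1).PosSemidef

/-- A quantum channel: completely positive and trace preserving. -/
def IsQuantumChannel {n : Type*} [Fintype n] [DecidableEq n]
    (Φ : Matrix n n ℂ →ₗ[ℂ] Matrix n n ℂ) : Prop :=
  IsCompletelyPositive Φ ∧ IsTracePreserving Φ

/-- The induced 1→1 norm of a superoperator: supremum of trace norms of images of
density matrices. -/
noncomputable def norm11 {n : Type*} [Fintype n] [DecidableEq n]
    (M : Matrix n n ℂ → Matrix n n ℂ) : ℝ :=
  ⨆ ρ : {ρ : Matrix n n ℂ // IsDensityMatrix ρ}, traceNorm (M ρ)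

/-- The induced 1→1 norm of a superoperator: supremum of trace norms of images of the
trace-norm unit ball. -/
noncomputable def norm11Ball {n : Type*} [Fintype n] [DecidableEq n]
    (M : Matrix n n ℂ → Matrix n n ℂ) : ℝ :=
  ⨆ X : {X : Matrix n n ℂ // traceNorm X ≤ 1}, traceNorm (M X)


/-!
Pass through `K1^τ ρ2` with the triangle inequality. The leg `ρ1 - K1^τ ρ2` is at most `ε` by
the mixing hypothesis; the leg `K1^τ ρ2 - ρ2` telescopes into the `τ` differences
`K1^(k+1) ρ2 - K1^k ρ2 = K1^k (K1 ρ2 - ρ2)`, and each has trace norm at most `‖K1 ρ2 - ρ2‖₁`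
because a positive trace-preserving map contracts the trace norm of Hermitian matrices.

On Hermitian matrices the trace norm is `tr A⁺ + tr A⁻`, and `‖P - Q‖₁ ≤ tr P + tr Q` for all
positive `P`, `Q`: with `S` the sign of `P - Q` one has `S (P - Q) = |P - Q|` and `-1 ≤ S ≤ 1`,
so `tr |P - Q| = tr (S P) - tr (S Q) ≤ tr P + tr Q`. Contraction and the triangle inequality
both follow by applying this to Jordan decompositions.
-/

open scoped MatrixOrder

section

variable {n : Type*}

def IsPositiveMap (Φ : Matrix n n ℂ →ₗ[ℂ] Matrix n n ℂ) : Prop :=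
  ∀ A : Matrix n n ℂ, A.PosSemidef → (Φ A).PosSemidef

lemma IsPositiveMap.pow {K : Matrix n n ℂ →ₗ[ℂ] Matrix n n ℂ} (hK : IsPositiveMap K) (m : ℕ) :
    IsPositiveMap (K ^ m) := by
  induction m with
  | zero => exact fun A hA => hA
  | succ m ih => exact fun A hA => ih _ (hK A hA)

variable [Fintype n] [DecidableEq n]

lemma traceNorm_eq_re_trace_abs (A : Matrix n n ℂ) : traceNorm A = (CFC.abs A).trace.re := by
  have hAA := Matrix.posSemidef_conjTranspose_mul_self A
  rw [CFC.abs, Matrix.star_eq_conjTranspose, CFC.sqrt_eq_real_sqrt _ hAA.nonneg, cfcₙ_eq_cfc,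
    hAA.1.cfc_eq]
  rfl

lemma traceNorm_zero : traceNorm (0 : Matrix n n ℂ) = 0 := by
  simp [traceNorm_eq_re_trace_abs]

lemma traceNorm_neg (A : Matrix n n ℂ) : traceNorm (-A) = traceNorm A := by
  rw [traceNorm_eq_re_trace_abs, traceNorm_eq_re_trace_abs, CFC.abs_neg]

lemma traceNorm_eq_re_trace_posPart_add_negPart {A : Matrix n n ℂ} (hA : A.IsHermitian) :
    traceNorm A = (A⁺).trace.re + (A⁻).trace.re := by
  rw [traceNorm_eq_re_trace_abs, ← CFC.posPart_add_negPart A hA, Matrix.trace_add, Complex.add_re]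

lemma re_trace_mul_nonneg {A B : Matrix n n ℂ} (hA : 0 ≤ A) (hB : 0 ≤ B) :
    0 ≤ (A * B).trace.re := by
  have hconj : 0 ≤ CFC.sqrt A * B * CFC.sqrt A :=
    (CFC.sqrt_nonneg A).isSelfAdjoint.conjugate_nonneg hB
  rw [← CFC.sqrt_mul_sqrt_self A, mul_assoc, Matrix.trace_mul_comm]
  exact (Complex.nonneg_iff.mp hconj.posSemidef.trace_nonneg).1

lemma traceNorm_sub_le {P Q : Matrix n n ℂ} (hP : P.PosSemidef) (hQ : Q.PosSemidef) :
    traceNorm (P - Q) ≤ P.trace.re + Q.trace.re := by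
  set A := P - Q
  have hA : IsSelfAdjoint A := hP.isHermitian.sub hQ.isHermitian
  let sign : ℝ → ℝ := fun x => if 0 ≤ x then 1 else -1
  have hsign : ContinuousOn sign (spectrum ℝ A) := Matrix.finite_real_spectrum.continuousOn _
  set S := cfc sign A
  have hSA : S * A = CFC.abs A := calc
    S * A = cfc (fun x => sign x * x) A := by rw [cfc_mul .., cfc_id' ℝ A]
    _ = cfc (fun x => ‖x‖) A := cfc_congr fun x _ => by
      by_cases hx : 0 ≤ x
      · simp [sign, hx, abs_of_nonneg]
      · simp [sign, hx, abs_of_neg (not_le.mp hx)]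
    _ = CFC.abs A := (CFC.abs_eq_cfc_norm A).symm
  have hS_le_one : 0 ≤ 1 - S := by
    rw [← cfc_one ℝ A, ← cfc_sub ..]
    exact cfc_nonneg fun x _ => by by_cases hx : 0 ≤ x <;> simp [sign, hx]
  have hneg_one_le_S : 0 ≤ 1 + S := by
    rw [← cfc_one ℝ A, ← cfc_add ..]
    exact cfc_nonneg fun x _ => by by_cases hx : 0 ≤ x <;> simp [sign, hx]
  have hSP := re_trace_mul_nonneg hS_le_one hP.nonneg
  have hSQ := re_trace_mul_nonneg hneg_one_le_S hQ.nonneg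
  rw [sub_mul, one_mul, Matrix.trace_sub, Complex.sub_re] at hSP
  rw [add_mul, one_mul, Matrix.trace_add, Complex.add_re] at hSQ
  rw [traceNorm_eq_re_trace_abs, ← hSA, mul_sub, Matrix.trace_sub, Complex.sub_re]
  linarith

lemma traceNorm_add_le_of_isHermitian {A B : Matrix n n ℂ} (hA : A.IsHermitian)
    (hB : B.IsHermitian) : traceNorm (A + B) ≤ traceNorm A + traceNorm B := by
  have hAB : A + B = (A⁺ + B⁺) - (A⁻ + B⁻) := by
    conv_lhs => rw [← CFC.posPart_sub_negPart A hA, ← CFC.posPart_sub_negPart B hB]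
    abel
  have hbound := traceNorm_sub_le ((CFC.posPart_nonneg A).posSemidef.add
    (CFC.posPart_nonneg B).posSemidef) ((CFC.negPart_nonneg A).posSemidef.add
    (CFC.negPart_nonneg B).posSemidef)
  rw [traceNorm_eq_re_trace_posPart_add_negPart hA,
    traceNorm_eq_re_trace_posPart_add_negPart hB, hAB]
  simp only [Matrix.trace_add, Complex.add_re] at hbound
  linarith

-- The `k = 1` ampliation of `K` applied to `A` reindexed along `n × Fin 1` is `K A` reindexed.
lemma IsCompletelyPositive.isPositiveMap {K : Matrix n n ℂ →ₗ[ℂ] Matrix n n ℂ}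
    (hK : IsCompletelyPositive K) : IsPositiveMap K := fun A hA =>
  (hK 1 (A.submatrix Prod.fst Prod.fst) (hA.submatrix _)).submatrix fun i : n => (i, 0)

lemma IsTracePreserving.pow {K : Matrix n n ℂ →ₗ[ℂ] Matrix n n ℂ} (hK : IsTracePreserving K)
    (m : ℕ) : IsTracePreserving (K ^ m) := by
  induction m with
  | zero => exact fun A => rfl
  | succ m ih => exact fun A => (ih _).trans (hK A)

namespace IsPositiveMap

variable {K : Matrix n n ℂ →ₗ[ℂ] Matrix n n ℂ}

lemma isHermitian_map (hK : IsPositiveMap K) {A : Matrix n n ℂ} (hA : A.IsHermitian) :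
    (K A).IsHermitian := by
  rw [← CFC.posPart_sub_negPart A hA, map_sub]
  exact (hK _ (CFC.posPart_nonneg A).posSemidef).isHermitian.sub
    (hK _ (CFC.negPart_nonneg A).posSemidef).isHermitian

lemma traceNorm_map_le (hK : IsPositiveMap K) (hTP : IsTracePreserving K) {A : Matrix n n ℂ}
    (hA : A.IsHermitian) : traceNorm (K A) ≤ traceNorm A := by
  have hKA : K A = K A⁺ - K A⁻ := by rw [← map_sub, CFC.posPart_sub_negPart A hA]
  rw [hKA, traceNorm_eq_re_trace_posPart_add_negPart hA, ← hTP A⁺, ← hTP A⁻]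
  exact traceNorm_sub_le (hK _ (CFC.posPart_nonneg A).posSemidef)
    (hK _ (CFC.negPart_nonneg A).posSemidef)

lemma traceNorm_pow_apply_sub_le (hK : IsPositiveMap K) (hTP : IsTracePreserving K)
    {ρ : Matrix n n ℂ} (hρ : ρ.IsHermitian) (m : ℕ) :
    traceNorm ((K ^ m) ρ - ρ) ≤ m * traceNorm (K ρ - ρ) := by
  induction m with
  | zero => simp [traceNorm_zero]
  | succ m ih =>
    have hstep : (K ^ (m + 1)) ρ - ρ = (K ^ m) (K ρ - ρ) + ((K ^ m) ρ - ρ) := by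
      rw [map_sub, pow_succ, Module.End.mul_apply]
      abel
    have hdiff : (K ρ - ρ).IsHermitian := (hK.isHermitian_map hρ).sub hρ
    calc traceNorm ((K ^ (m + 1)) ρ - ρ)
        ≤ traceNorm ((K ^ m) (K ρ - ρ)) + traceNorm ((K ^ m) ρ - ρ) := by
          rw [hstep]
          exact traceNorm_add_le_of_isHermitian ((hK.pow m).isHermitian_map hdiff)
            (((hK.pow m).isHermitian_map hρ).sub hρ)
      _ ≤ traceNorm (K ρ - ρ) + m * traceNorm (K ρ - ρ) :=
          add_le_add ((hK.pow m).traceNorm_map_le (hTP.pow m) hdiff) ih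
      _ = (m + 1 : ℕ) * traceNorm (K ρ - ρ) := by push_cast; ring

end IsPositiveMap

end

theorem fixed_point_distance_bound_general {n : Type*} [Fintype n] [DecidableEq n]
    (K1 : Matrix n n ℂ →ₗ[ℂ] Matrix n n ℂ)
    (hK1 : IsQuantumChannel K1)
    (ρ1 ρ2 : Matrix n n ℂ) (hρ1 : IsDensityMatrix ρ1) (hρ2 : IsDensityMatrix ρ2)
    (τ : ℕ) (ε : ℝ)
    (hmix : ∀ ρ : Matrix n n ℂ, IsDensityMatrix ρ → traceNorm ((⇑K1)^[τ] ρ - ρ1) ≤ ε) :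
    traceNorm (ρ1 - ρ2) ≤ ε + τ * traceNorm (K1 ρ2 - ρ2) := by
  obtain ⟨hCP, hTP⟩ := hK1
  have hpos := hCP.isPositiveMap
  have hmixed : traceNorm ((K1 ^ τ) ρ2 - ρ1) ≤ ε := by
    simpa only [Module.End.pow_apply] using hmix ρ2 hρ2
  have hτρ2 : ((K1 ^ τ) ρ2).IsHermitian := (hpos.pow τ).isHermitian_map hρ2.1.isHermitian
  calc traceNorm (ρ1 - ρ2)
      = traceNorm (-((K1 ^ τ) ρ2 - ρ1) + ((K1 ^ τ) ρ2 - ρ2)) := by congr 1; abel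
    _ ≤ traceNorm ((K1 ^ τ) ρ2 - ρ1) + traceNorm ((K1 ^ τ) ρ2 - ρ2) := by
        rw [← traceNorm_neg ((K1 ^ τ) ρ2 - ρ1)]
        exact traceNorm_add_le_of_isHermitian (hτρ2.sub hρ1.1.isHermitian).neg
          (hτρ2.sub hρ2.1.isHermitian)
    _ ≤ ε + τ * traceNorm (K1 ρ2 - ρ2) :=
        add_le_add hmixed (hpos.traceNorm_pow_apply_sub_le hTP hρ2.1.isHermitian τ)

theorem fixed_point_distance_bound {n : Type*} [Fintype n] [DecidableEq n]
    (K1 K2 : Matrix n n ℂ →ₗ[ℂ] Matrix n n ℂ)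
    (hK1 : IsQuantumChannel K1) (hK2 : IsQuantumChannel K2)
    (ρ1 ρ2 : Matrix n n ℂ) (hρ1 : IsDensityMatrix ρ1) (hρ2 : IsDensityMatrix ρ2)
    (hfix1 : K1 ρ1 = ρ1) (hfix2 : K2 ρ2 = ρ2)
    (τ : ℕ) (hτ : 0 < τ) (ε : ℝ)
    (hmix : ∀ ρ : Matrix n n ℂ, IsDensityMatrix ρ → traceNorm ((⇑K1)^[τ] ρ - ρ1) ≤ ε) :
    traceNorm (ρ1 - ρ2) ≤ ε + τ * traceNorm (K1 ρ2 - ρ2) :=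
  fixed_point_distance_bound_general K1 hK1 ρ1 ρ2 hρ1 hρ2 τ ε hmix
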